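/- arXiv:2502.18633 — 4 statements merged into one kernel-verified Lean document; each statement's English description precedes it below -/
import Mathlib

section
/- Let P be an n×k real matrix with orthonormal columns (P^T P = I_k), where k ≤ n. If the row 2-norms of P are arranged in descending order ‖P_{(i_1,:)}‖₂ ≥ ‖P_{(i_2,:)}‖₂ ≥ ... ≥ ‖P_{(i_n,:)}‖₂, then for each j with 1 ≤ j ≤ k, ‖P_{(i_j,:)}‖₂ ≥ √((k-j+1)/(n-j+1)). -/
open Matrix
/-- Row 2-norm of a matrix. -/
noncomputable def rowNorm {n k : ℕ} (P : Matrix (Fin n) (Fin k) ℝ) (i : Fin n) : ℝ :=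
  Real.sqrt (∑ j, (P i j) ^ 2)

/-- If `P ∈ ℝ^{n×k}` has orthonormal columns and the permutation `σ` arranges its
row norms descendingly, then the `j`-th largest row norm (`j` zero-indexed, `j < k`)
is at least `√((k-j)/(n-j))`, i.e. `√((k-j+1)/(n-j+1))` in one-indexed notation. -/
theorem stmt0 {n k : ℕ} (hkn : k ≤ n) (P : Matrix (Fin n) (Fin k) ℝ)
    (hP : Pᵀ * P = 1) (σ : Equiv.Perm (Fin n))
    (hdesc : ∀ a b : Fin n, a ≤ b → rowNorm P (σ b) ≤ rowNorm P (σ a)) :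
    ∀ j : Fin k,
      Real.sqrt (((k : ℝ) - (j : ℝ)) / ((n : ℝ) - (j : ℝ)))
        ≤ rowNorm P (σ (Fin.castLE hkn j)) := by
  intro j
  set s : Fin n → ℝ := fun i => ∑ m, (P i m) ^ 2 with hsdef
  have hs0 : ∀ i, 0 ≤ s i := fun i => Finset.sum_nonneg fun m _ => sq_nonneg _
  have hsum : ∑ i, s i = (k : ℝ) := by
    have := congrArg Matrix.trace hP
    simp only [Matrix.trace, Matrix.diag, Matrix.mul_apply, Matrix.transpose_apply,
      Matrix.trace_one] at this
    rw [hsdef]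
    rw [Finset.sum_comm] at this
    simpa [sq] using this
  have hle1 : ∀ i, s i ≤ 1 := by
    intro i
    set Q := P * Pᵀ with hQ
    have hidem : Q * Q = Q := by
      rw [hQ, Matrix.mul_assoc, ← Matrix.mul_assoc Pᵀ, hP, Matrix.one_mul]
    have hdiag : Q i i = s i := by
      simp [hQ, Matrix.mul_apply, Matrix.transpose_apply, sq, hsdef]
    have h1 : Q i i = ∑ m, (Q i m) ^ 2 := by
      conv_lhs => rw [← hidem]
      rw [Matrix.mul_apply]
      congr 1; ext m
      have hsymm : Q m i = Q i m := by
        simp [hQ, Matrix.mul_apply, Matrix.transpose_apply, mul_comm]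
      rw [hsymm, sq]
    have h2 : (Q i i) ^ 2 ≤ ∑ m, (Q i m) ^ 2 :=
      Finset.single_le_sum (f := fun m => (Q i m) ^ 2) (fun m _ => sq_nonneg _)
        (Finset.mem_univ i)
    nlinarith [hs0 i, hdiag, h1, h2]
  have hmono : ∀ a b : Fin n, a ≤ b → s (σ b) ≤ s (σ a) := by
    intro a b hab
    have h := hdesc a b hab
    unfold rowNorm at h
    nlinarith [Real.sq_sqrt (hs0 (σ a)), Real.sq_sqrt (hs0 (σ b)),
      Real.sqrt_nonneg (∑ m, (P (σ b) m) ^ 2), Real.sqrt_nonneg (∑ m, (P (σ a) m) ^ 2), h]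
  set j' : Fin n := Fin.castLE hkn j with hj'
  have hsump : ∑ i, s (σ i) = (k : ℝ) := by
    rw [← hsum]; exact Equiv.sum_comp σ s
  have huniv : (Finset.univ : Finset (Fin n)) = Finset.Iio j' ∪ Finset.Ici j' := by
    ext i
    simp [Finset.mem_union, lt_or_ge i j']
  have hdisj : Disjoint (Finset.Iio j') (Finset.Ici j') := by
    rw [Finset.disjoint_left]
    intro x hx hx2
    simp only [Finset.mem_Iio, Finset.mem_Ici] at *
    exact absurd hx2 (not_le.mpr hx)
  have hsplit : ∑ i, s (σ i) =
      (∑ i ∈ Finset.Iio j', s (σ i)) + ∑ i ∈ Finset.Ici j', s (σ i) := by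
    rw [huniv, Finset.sum_union hdisj]
  have hcard1 : (Finset.Iio j').card = (j : ℕ) := Fin.card_Iio j'
  have hcard2 : (Finset.Ici j').card = n - (j : ℕ) := Fin.card_Ici j'
  have hbound1 : ∑ i ∈ Finset.Iio j', s (σ i) ≤ (j : ℕ) := by
    calc ∑ i ∈ Finset.Iio j', s (σ i) ≤ ∑ _i ∈ Finset.Iio j', (1 : ℝ) :=
          Finset.sum_le_sum fun i _ => hle1 _
      _ = (j : ℕ) := by simp [hcard1]
  have hbound2 : ∑ i ∈ Finset.Ici j', s (σ i) ≤ (n - (j : ℕ) : ℕ) * s (σ j') := by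
    calc ∑ i ∈ Finset.Ici j', s (σ i) ≤ ∑ _i ∈ Finset.Ici j', s (σ j') :=
          Finset.sum_le_sum fun i hi => hmono j' i (Finset.mem_Ici.mp hi)
      _ = (n - (j : ℕ) : ℕ) * s (σ j') := by rw [Finset.sum_const, hcard2]; ring
  have hjk : (j : ℕ) < k := j.isLt
  have hjn : (j : ℕ) < n := lt_of_lt_of_le hjk hkn
  have hkey : ((k : ℝ) - (j : ℝ)) / ((n : ℝ) - (j : ℝ)) ≤ s (σ j') := by
    have hpos : (0:ℝ) < (n : ℝ) - ((j : ℕ) : ℝ) := by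
      have : ((j : ℕ) : ℝ) < (n : ℝ) := by exact_mod_cast hjn
      linarith
    rw [div_le_iff₀ hpos]
    have hcast : ((n - (j : ℕ) : ℕ) : ℝ) = (n : ℝ) - (j : ℝ) := by
      push_cast [Nat.cast_sub hjn.le]; ring
    rw [← hcast]
    linarith [hbound1, hbound2, hsump, hsplit]
  unfold rowNorm
  exact Real.sqrt_le_sqrt hkey
end

section
/- Let P be an n×k real matrix with orthonormal columns. Then for each j with 1 ≤ j ≤ k, the j-th largest row 2-norm of P is at least 1/√(n-k+1). -/
open Matrix

/-- If `P ∈ ℝ^{n×k}` has orthonormal columns, then for each `j < k` the `j`-th largest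
row 2-norm of `P` is at least `1/√(n-k+1)`. -/
theorem stmt1 {n k : ℕ} (hkn : k ≤ n) (P : Matrix (Fin n) (Fin k) ℝ)
    (hP : Pᵀ * P = 1) (σ : Equiv.Perm (Fin n))
    (hdesc : ∀ a b : Fin n, a ≤ b → rowNorm P (σ b) ≤ rowNorm P (σ a)) :
    ∀ j : Fin k, 1 / Real.sqrt ((n : ℝ) - (k : ℝ) + 1)
      ≤ rowNorm P (σ (Fin.castLE hkn j)) := by
  intro j
  set r : Fin n → ℝ := fun i => ∑ l, (P (σ i) l) ^ 2 with hr
  have hr0 : ∀ i, 0 ≤ r i := fun i => Finset.sum_nonneg fun _ _ => sq_nonneg _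
  -- total sum is k
  have hsum : ∑ i, r i = (k : ℝ) := by
    have ht : trace (Pᵀ * P) = (k : ℝ) := by
      rw [hP]; simp [Matrix.trace_one]
    have : ∑ i, r i = ∑ i : Fin n, ∑ l, (P i l) ^ 2 :=
      Equiv.sum_comp σ (fun i => ∑ l, (P i l) ^ 2)
    rw [this, Finset.sum_comm, ← ht]
    simp [Matrix.trace, Matrix.diag, Matrix.mul_apply, Matrix.transpose_apply, sq]
  -- each row norm squared ≤ 1
  have hle1 : ∀ i, r i ≤ 1 := by
    intro i
    set Q := P * Pᵀ with hQdef
    have hQ2 : Q * Q = Q := by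
      rw [hQdef, Matrix.mul_assoc, ← Matrix.mul_assoc Pᵀ, hP, Matrix.one_mul]
    have hQs : ∀ a b, Q a b = Q b a := by
      intro a b
      simp [hQdef, Matrix.mul_apply, mul_comm]
    have hdiag : r i = Q (σ i) (σ i) := by
      simp [hr, hQdef, Matrix.mul_apply, Matrix.transpose_apply, sq]
    have hexp : Q (σ i) (σ i) = ∑ l, (Q (σ i) l) ^ 2 := by
      conv_lhs => rw [← hQ2]
      rw [Matrix.mul_apply]
      exact Finset.sum_congr rfl fun l _ => by rw [sq, hQs l (σ i)]
    have hge : (Q (σ i) (σ i)) ^ 2 ≤ Q (σ i) (σ i) := by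
      conv_rhs => rw [hexp]
      exact Finset.single_le_sum (f := fun l => (Q (σ i) l) ^ 2)
        (fun l _ => sq_nonneg _) (Finset.mem_univ (σ i))
    rw [hdiag]; nlinarith [hge]
  -- monotonicity of r
  have hmono : ∀ a b : Fin n, a ≤ b → r b ≤ r a := by
    intro a b hab
    have := hdesc a b hab
    simp only [rowNorm] at this
    exact (Real.sqrt_le_sqrt_iff (hr0 a)).mp this
  set jn : Fin n := Fin.castLE hkn j with hjn
  -- split the sum
  have hsplit :
      ∑ i ∈ Finset.univ.filter (fun i : Fin n => (i : ℕ) < (j : ℕ)), r i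
      + ∑ i ∈ Finset.univ.filter (fun i : Fin n => ¬ (i : ℕ) < (j : ℕ)), r i
      = (k : ℝ) := by rw [Finset.sum_filter_add_sum_filter_not, hsum]
  have hjk : (j : ℕ) < k := j.isLt
  have hjnn : (j : ℕ) ≤ n := le_trans (le_of_lt hjk) hkn
  have hcard1 : (Finset.univ.filter (fun i : Fin n => (i : ℕ) < (j : ℕ))).card = (j : ℕ) := by
    have he : Finset.univ.filter (fun i : Fin n => (i : ℕ) < (j : ℕ)) = Finset.Iio jn :=
      Finset.ext fun i => by simp [Fin.lt_def, hjn]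
    rw [he, Fin.card_Iio]; simp [hjn]
  have hcard2 : (Finset.univ.filter (fun i : Fin n => ¬ (i : ℕ) < (j : ℕ))).card = n - (j : ℕ) := by
    have he : Finset.univ.filter (fun i : Fin n => ¬ (i : ℕ) < (j : ℕ)) = Finset.Ici jn :=
      Finset.ext fun i => by simp [Fin.le_def, hjn]
    rw [he, Fin.card_Ici]; simp [hjn]
  have hb1 : ∑ i ∈ Finset.univ.filter (fun i : Fin n => (i : ℕ) < (j : ℕ)), r i ≤ (j : ℕ) := by
    calc ∑ i ∈ Finset.univ.filter (fun i : Fin n => (i : ℕ) < (j : ℕ)), r i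
        ≤ ∑ _i ∈ Finset.univ.filter (fun i : Fin n => (i : ℕ) < (j : ℕ)), (1 : ℝ) :=
          Finset.sum_le_sum fun i _ => hle1 i
      _ = (j : ℕ) := by rw [Finset.sum_const, hcard1]; simp
  have hb2 : ∑ i ∈ Finset.univ.filter (fun i : Fin n => ¬ (i : ℕ) < (j : ℕ)), r i
      ≤ ((n - (j : ℕ) : ℕ) : ℝ) * r jn := by
    have : ∀ i ∈ Finset.univ.filter (fun i : Fin n => ¬ (i : ℕ) < (j : ℕ)), r i ≤ r jn := by
      intro i hi
      simp only [Finset.mem_filter, not_lt] at hi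
      exact hmono jn i (by rw [Fin.le_def]; simpa [hjn] using hi.2)
    calc ∑ i ∈ Finset.univ.filter (fun i : Fin n => ¬ (i : ℕ) < (j : ℕ)), r i
        ≤ ∑ _i ∈ Finset.univ.filter (fun i : Fin n => ¬ (i : ℕ) < (j : ℕ)), r jn :=
          Finset.sum_le_sum this
      _ = ((n - (j : ℕ) : ℕ) : ℝ) * r jn := by rw [Finset.sum_const, hcard2]; simp
  have hkey : (k : ℝ) ≤ (j : ℕ) + ((n : ℝ) - (j : ℕ)) * r jn := by
    have hc : ((n - (j : ℕ) : ℕ) : ℝ) = (n : ℝ) - (j : ℕ) := by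
      rw [Nat.cast_sub hjnn]
    nlinarith [hsplit, hb1, hb2, hc.symm ▸ hb2]
  -- final arithmetic
  have hpos : (0 : ℝ) < (n : ℝ) - (k : ℝ) + 1 := by
    have : (k : ℝ) ≤ (n : ℝ) := Nat.cast_le.mpr hkn
    linarith
  have hfin : ((n : ℝ) - (k : ℝ) + 1)⁻¹ ≤ r jn := by
    rw [inv_le_iff_one_le_mul₀ hpos]
    have hj1 : ((j : ℕ) : ℝ) + 1 ≤ (k : ℝ) := by exact_mod_cast hjk
    have hkn' : (k : ℝ) ≤ (n : ℝ) := Nat.cast_le.mpr hkn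
    nlinarith [hkey, hr0 jn, mul_nonneg (by linarith : (0:ℝ) ≤ (k:ℝ) - (j:ℕ) - 1)
      (by linarith : (0:ℝ) ≤ (n:ℝ) - (k:ℝ)),
      mul_le_mul_of_nonneg_right hkey (le_of_lt hpos)]
  rw [rowNorm, one_div, ← Real.sqrt_inv]
  exact Real.sqrt_le_sqrt hfin
end

section
/- Let D ∈ ℝ^{n×k} and P ∈ ℝ^{n×k} with orthonormal columns such that P^T D is not symmetric positive semidefinite. Let Q ∈ ℝ^{k×k} be an orthogonal polar factor of P^T D. Then PQ has orthonormal columns, (PQ)^T D is symmetric positive semidefinite, and tr((PQ)^T D) = ‖P^T D‖_tr > tr(P^T D). -/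
open Matrix
open scoped MatrixOrder

/-- The trace (nuclear) norm of a real matrix: the sum of its singular values. -/
noncomputable def traceNorm {m k : ℕ} (B : Matrix (Fin m) (Fin k) ℝ) : ℝ :=
  ∑ i, Real.sqrt ((Matrix.isHermitian_conjTranspose_mul_self B).eigenvalues i)

lemma trace_sqrt_aux {k : ℕ} {A : Matrix (Fin k) (Fin k) ℝ} (hA : A.PosSemidef) :
    (CFC.sqrt A).trace = ∑ i, Real.sqrt (hA.1.eigenvalues i) := by
  rw [CFC.sqrt_eq_cfc, cfc_nnreal_eq_real _ A, hA.1.cfc_eq, Matrix.IsHermitian.cfc,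
    Unitary.conjStarAlgAut_apply, Matrix.trace_mul_cycle,
    (hA.1.eigenvectorUnitary.2).1, Matrix.one_mul, Matrix.trace_diagonal]
  simp [Function.comp, hA.eigenvalues_nonneg]

/-- Let `P ∈ 𝕆^{n×k}` and `D ∈ ℝ^{n×k}` with `Pᵀ D` not symmetric positive semidefinite,
and let `Q` be an orthogonal polar factor of `Pᵀ D` (i.e. `Qᵀ Q = 1` and `Pᵀ D = Q H`
with `H ⪰ 0`). Then `PQ` has orthonormal columns, `(PQ)ᵀ D ⪰ 0`, and
`tr((PQ)ᵀ D) = ‖Pᵀ D‖_tr > tr(Pᵀ D)`. -/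
theorem stmt11 {n k : ℕ} (P D : Matrix (Fin n) (Fin k) ℝ)
    (hP : Pᵀ * P = 1) (hnot : ¬ (Pᵀ * D).PosSemidef)
    (Q H : Matrix (Fin k) (Fin k) ℝ) (hQ : Qᵀ * Q = 1) (hH : H.PosSemidef)
    (hpolar : Pᵀ * D = Q * H) :
    (P * Q)ᵀ * (P * Q) = 1 ∧ ((P * Q)ᵀ * D).PosSemidef ∧
      ((P * Q)ᵀ * D).trace = traceNorm (Pᵀ * D) ∧
      (Pᵀ * D).trace < ((P * Q)ᵀ * D).trace := by
  have hHt : Hᵀ = H := by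
    rw [← Matrix.conjTranspose_eq_transpose_of_trivial]
    exact hH.1
  have hPQ : (P * Q)ᵀ * (P * Q) = 1 := by
    rw [Matrix.transpose_mul, Matrix.mul_assoc, ← Matrix.mul_assoc Pᵀ P Q, hP,
      Matrix.one_mul, hQ]
  have hQT : (P * Q)ᵀ * D = H := by
    rw [Matrix.transpose_mul, Matrix.mul_assoc, hpolar, ← Matrix.mul_assoc, hQ,
      Matrix.one_mul]
  -- the trace norm computation
  have key : (Pᵀ * D)ᵀ * (Pᵀ * D) = H ^ 2 := by
    rw [hpolar, Matrix.transpose_mul, Matrix.mul_assoc, ← Matrix.mul_assoc Qᵀ Q H, hQ,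
      Matrix.one_mul, hHt, ← pow_two]
  have gen : ∀ (A : Matrix (Fin k) (Fin k) ℝ) (hA : A.IsHermitian), A = H ^ 2 →
      ∑ i, Real.sqrt (hA.eigenvalues i) = H.trace := by
    rintro A hA rfl
    have h2 : (H ^ 2).PosSemidef := hH.pow 2
    have he : hA = h2.1 := Subsingleton.elim _ _
    rw [he, ← trace_sqrt_aux h2]
    congr 1
    exact CFC.sqrt_sq H hH.nonneg
  have htn : traceNorm (Pᵀ * D) = H.trace :=
    gen _ (Matrix.isHermitian_conjTranspose_mul_self (Pᵀ * D)) key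
  -- the strict inequality
  set S := CFC.sqrt H with hSdef
  have hS : S * S = H := CFC.sqrt_mul_sqrt_self H hH.nonneg
  have hSt : Sᵀ = S := by
    rw [← Matrix.conjTranspose_eq_transpose_of_trivial]
    exact (CFC.sqrt_nonneg H).posSemidef.1
  set M := S - Q * S with hMdef
  have hM : M ≠ 0 := by
    intro h0
    apply hnot
    have hQS : Q * S = S := by
      have := sub_eq_zero.mp h0
      exact this.symm
    have : Q * H = H := by rw [← hS, ← Matrix.mul_assoc, hQS, hS]
    rw [hpolar, this]
    exact hH
  have hMt : Mᵀ = S - S * Qᵀ := by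
    rw [hMdef, Matrix.transpose_sub, Matrix.transpose_mul, hSt]
  have e1 : Mᵀ * M = (S * S - S * (Q * S)) - (S * (Qᵀ * S) - S * (Qᵀ * (Q * S))) := by
    rw [hMt, hMdef]
    noncomm_ring
  have t2 : (S * (Q * S)).trace = (Q * H).trace := by
    rw [Matrix.trace_mul_comm, Matrix.mul_assoc, hS]
  have t3 : (S * (Qᵀ * (Q * S))).trace = H.trace := by
    rw [← Matrix.mul_assoc Qᵀ Q S, hQ, Matrix.one_mul, hS]
  have t4 : (S * (Qᵀ * S)).trace = (Q * H).trace := by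
    rw [Matrix.trace_mul_comm, Matrix.mul_assoc, hS, ← Matrix.trace_transpose,
      Matrix.transpose_mul, hHt, Matrix.transpose_transpose, Matrix.trace_mul_comm]
  have etr : (Mᵀ * M).trace = 2 * H.trace - 2 * (Q * H).trace := by
    rw [e1, Matrix.trace_sub, Matrix.trace_sub, Matrix.trace_sub, hS, t2, t3, t4]
    ring
  have htr : (Mᵀ * M).trace = ∑ j, ∑ i, (M i j) ^ 2 := by
    simp [Matrix.trace, Matrix.diag, Matrix.mul_apply, sq]
  have hpos : 0 < (Mᵀ * M).trace := by
    rw [htr]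
    obtain ⟨i, j, hij⟩ : ∃ i j, M i j ≠ 0 := by
      by_contra h
      push_neg at h
      exact hM (by ext i j; simpa using h i j)
    refine Finset.sum_pos' (fun j _ => Finset.sum_nonneg fun i _ => sq_nonneg _)
      ⟨j, Finset.mem_univ j, Finset.sum_pos' (fun i _ => sq_nonneg _)
        ⟨i, Finset.mem_univ i, by positivity⟩⟩
  have hlt : (Q * H).trace < H.trace := by linarith [etr ▸ hpos]
  refine ⟨hPQ, by rw [hQT]; exact hH, by rw [hQT, htn], ?_⟩
  rw [hQT, hpolar]
  exact hlt
end

section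
/- Under the setup of the NEPv residual identity, if P ∈ 𝕆^{n×k} satisfies H_{ε₀}(P)P = PΩ for some symmetric Ω ∈ ℝ^{k×k} and D^T P is symmetric, then P satisfies the KKT condition 𝓗_{ε₀}(P) = PΛ with Λ = Ω − 2h(P)D^T P symmetric. Conversely, if 𝓗_{ε₀}(P) = PΛ with Λ symmetric, then H_{ε₀}(P)P = P(Λ + 2h(P)D^T P) and Λ + 2h(P)D^T P is symmetric provided D^T P is symmetric. -/
open Matrix

/-- `h(P) = tr(Pᵀ D)/tr(Pᵀ A P)`. -/
noncomputable def hFun {n k : ℕ} (A : Matrix (Fin n) (Fin n) ℝ)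
    (D P : Matrix (Fin n) (Fin k) ℝ) : ℝ :=
  (Pᵀ * D).trace / (Pᵀ * A * P).trace

/-- The Euclidean gradient `𝓗_{ε₀}(P) = 2h(P)[D − h(P)AP] − α Σᵢ (eᵢeᵢᵀP)/√(‖eᵢᵀP‖² + ε₀²)`. -/
noncomputable def scrH {n k : ℕ} (A : Matrix (Fin n) (Fin n) ℝ)
    (D : Matrix (Fin n) (Fin k) ℝ) (α ε₀ : ℝ) (P : Matrix (Fin n) (Fin k) ℝ) :
    Matrix (Fin n) (Fin k) ℝ :=
  (2 * hFun A D P) • (D - hFun A D P • (A * P))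
    - α • ∑ i : Fin n,
        (Real.sqrt ((∑ j, (P i j) ^ 2) + ε₀ ^ 2))⁻¹ • (Matrix.single i i (1 : ℝ) * P)

/-- The NEPv coefficient matrix
`H_{ε₀}(P) = 2h(P)[(DPᵀ + PDᵀ) − h(P)A] − α Σᵢ (eᵢeᵢᵀ)/√(‖eᵢᵀP‖² + ε₀²)`. -/
noncomputable def bigH {n k : ℕ} (A : Matrix (Fin n) (Fin n) ℝ)
    (D : Matrix (Fin n) (Fin k) ℝ) (α ε₀ : ℝ) (P : Matrix (Fin n) (Fin k) ℝ) :
    Matrix (Fin n) (Fin n) ℝ :=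
  (2 * hFun A D P) • ((D * Pᵀ + P * Dᵀ) - hFun A D P • A)
    - α • ∑ i : Fin n,
        (Real.sqrt ((∑ j, (P i j) ^ 2) + ε₀ ^ 2))⁻¹ • Matrix.single i i (1 : ℝ)

private lemma nepvKey {n k : ℕ} (A : Matrix (Fin n) (Fin n) ℝ)
    (D P : Matrix (Fin n) (Fin k) ℝ) (hP : Pᵀ * P = 1) (α ε₀ : ℝ) :
    bigH A D α ε₀ P * P
      = scrH A D α ε₀ P + (2 * hFun A D P) • (P * (Dᵀ * P)) := by
  unfold bigH scrH
  set h := hFun A D P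
  set c : Fin n → ℝ := fun i => (Real.sqrt ((∑ j, (P i j) ^ 2) + ε₀ ^ 2))⁻¹ with hc
  have hsum : (∑ i : Fin n, c i • (single i i (1:ℝ) * P))
      = (∑ i : Fin n, c i • single i i (1:ℝ)) * P := by
    rw [Matrix.sum_mul]
    exact Finset.sum_congr rfl fun i _ => (Matrix.smul_mul _ _ _).symm
  rw [hsum, Matrix.sub_mul, Matrix.smul_mul, Matrix.smul_mul, Matrix.sub_mul,
    Matrix.add_mul, Matrix.smul_mul, Matrix.mul_assoc, Matrix.mul_assoc, hP, Matrix.mul_one]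
  module

/-- Equivalence of the NEPv and the KKT condition when `Dᵀ P` is symmetric:
if `H_{ε₀}(P)P = PΩ` with `Ω` symmetric and `Dᵀ P` symmetric, then
`𝓗_{ε₀}(P) = PΛ` with `Λ = Ω − 2h(P)Dᵀ P` symmetric; conversely, if `𝓗_{ε₀}(P) = PΛ`
with `Λ` symmetric, then `H_{ε₀}(P)P = P(Λ + 2h(P)Dᵀ P)`, the latter coefficient being
symmetric provided `Dᵀ P` is symmetric. -/
theorem stmt17 {n k : ℕ} (A : Matrix (Fin n) (Fin n) ℝ) (hA : A.IsSymm)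
    (D P : Matrix (Fin n) (Fin k) ℝ) (hP : Pᵀ * P = 1)
    (hpos : 0 < (Pᵀ * A * P).trace) (α ε₀ : ℝ) (hα : 0 < α) (hε : 0 < ε₀) :
    (∀ Ω : Matrix (Fin k) (Fin k) ℝ, Ω.IsSymm → (Dᵀ * P).IsSymm →
      bigH A D α ε₀ P * P = P * Ω →
        scrH A D α ε₀ P = P * (Ω - (2 * hFun A D P) • (Dᵀ * P)) ∧
          (Ω - (2 * hFun A D P) • (Dᵀ * P)).IsSymm) ∧
    (∀ Λ : Matrix (Fin k) (Fin k) ℝ, Λ.IsSymm →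
      scrH A D α ε₀ P = P * Λ →
        bigH A D α ε₀ P * P = P * (Λ + (2 * hFun A D P) • (Dᵀ * P)) ∧
          ((Dᵀ * P).IsSymm → (Λ + (2 * hFun A D P) • (Dᵀ * P)).IsSymm)) := by
  have key := nepvKey A D P hP α ε₀
  have hms : ∀ M : Matrix (Fin k) (Fin k) ℝ,
      P * ((2 * hFun A D P) • M) = (2 * hFun A D P) • (P * M) := fun M =>
    Matrix.mul_smul _ _ _
  constructor
  · intro Ω hΩ hDP hBig
    constructor
    · rw [Matrix.mul_sub, hms, ← hBig, key]
      abel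
    · rw [Matrix.IsSymm, Matrix.transpose_sub, Matrix.transpose_smul, hΩ, hDP]
  · intro Λ hΛ hScr
    constructor
    · rw [Matrix.mul_add, hms, ← hScr, key]
    · intro hDP
      rw [Matrix.IsSymm, Matrix.transpose_add, Matrix.transpose_smul, hΛ, hDP]
end
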